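/- arXiv:2001.10740 — 4 statements merged into one kernel-verified Lean document; each statement's English description precedes it below -/
import Mathlib

section
/- Let g : (0,∞) → ℝ be convex, non-increasing, continuously differentiable, with g' piecewise differentiable, and suppose there exists γ ∈ (0,1] such that γ·g'(r)² ≤ g''(r) for almost every r ∈ (0,∞). Then for all x, y > 0, (g(y) - g(x))² · γ ≤ (g'(y) - g'(x))·(y - x). -/
open MeasureTheory Set

/-!
By the fundamental theorem of calculus and Cauchy–Schwarz, for `x < y`,
`(g y - g x)² = (∫ₓʸ g')² ≤ (y - x) ∫ₓʸ g'²`. Since `g'` is monotone (convexity of `g`), the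
integral of its a.e. derivative is at most `g' y - g' x`, so `γ ∫ₓʸ g'² ≤ ∫ₓʸ g'' ≤ g' y - g' x`.
-/

theorem sq_intervalIntegral_le_mul_intervalIntegral_sq {f : ℝ → ℝ} {a b : ℝ}
    (hf : IntervalIntegrable f volume a b)
    (hf2 : IntervalIntegrable (fun t => f t ^ 2) volume a b) :
    (∫ t in a..b, f t) ^ 2 ≤ (b - a) * ∫ t in a..b, f t ^ 2 := by
  wlog hab : a < b generalizing a b
  · rcases (not_lt.1 hab).eq_or_lt with rfl | hba
    · simp
    have := this hf.symm hf2.symm hba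
    rw [intervalIntegral.integral_symm b a,
      intervalIntegral.integral_symm b a (f := fun t => f t ^ 2)]
    linarith
  set I := ∫ t in a..b, f t
  set J := ∫ t in a..b, f t ^ 2
  set c := I / (b - a)
  have hexpand : ∫ t in a..b, (f t - c) ^ 2 = J - 2 * c * I + (b - a) * c ^ 2 := by
    have hsplit : (fun t => (f t - c) ^ 2) = fun t => (f t ^ 2 - 2 * c * f t) + c ^ 2 := by
      funext t; ring
    rw [hsplit, intervalIntegral.integral_add (hf2.sub (hf.const_mul _)) intervalIntegrable_const,
      intervalIntegral.integral_sub hf2 (hf.const_mul _), intervalIntegral.integral_const_mul,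
      intervalIntegral.integral_const, smul_eq_mul]
  have hvar : 0 ≤ ∫ t in a..b, (f t - c) ^ 2 :=
    intervalIntegral.integral_nonneg hab.le fun t _ => sq_nonneg _
  have hc : c * (b - a) = I := div_mul_cancel₀ _ (sub_pos.2 hab).ne'
  nlinarith [sub_pos.2 hab]

theorem MonotoneOn.intervalIntegral_le_sub_of_ae_le_deriv {f φ : ℝ → ℝ} {a b : ℝ} (hab : a ≤ b)
    (hf : MonotoneOn f (Icc a b)) (hφ : IntervalIntegrable φ volume a b)
    (hφf : ∀ᵐ t, t ∈ Ioo a b → φ t ≤ deriv f t) :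
    ∫ t in a..b, φ t ≤ f b - f a := by
  rw [← uIcc_of_le hab] at hf
  calc ∫ t in a..b, φ t ≤ ∫ t in a..b, deriv f t := by
        refine intervalIntegral.integral_mono_ae_restrict hab hφ hf.intervalIntegrable_deriv ?_
        rw [← restrict_Ioo_eq_restrict_Icc]
        exact (ae_restrict_iff' measurableSet_Ioo).2 hφf
    _ ≤ f b - f a := by
        have := hf.intervalIntegral_deriv_mem_uIcc
        rw [uIcc_of_le (sub_nonneg.2 (hf (by simp [hab]) (by simp [hab]) hab))] at this
        exact this.2

theorem sq_sub_mul_le_of_mul_sq_le_deriv {g g' : ℝ → ℝ} {γ a b : ℝ} (hγ : 0 ≤ γ) (hab : a ≤ b)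
    (hg : ∀ t ∈ Icc a b, HasDerivAt g (g' t) t) (hg'c : ContinuousOn g' (Icc a b))
    (hg'm : MonotoneOn g' (Icc a b)) (hg'' : ∀ᵐ t, t ∈ Ioo a b → γ * g' t ^ 2 ≤ deriv g' t) :
    (g b - g a) ^ 2 * γ ≤ (g' b - g' a) * (b - a) := by
  rw [← uIcc_of_le hab] at hg hg'c
  have hftc : ∫ t in a..b, g' t = g b - g a :=
    intervalIntegral.integral_eq_sub_of_hasDerivAt hg hg'c.intervalIntegrable
  have hcs : (g b - g a) ^ 2 ≤ (b - a) * ∫ t in a..b, g' t ^ 2 :=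
    hftc ▸ sq_intervalIntegral_le_mul_intervalIntegral_sq hg'c.intervalIntegrable
      (hg'c.pow 2).intervalIntegrable
  have hkey : γ * ∫ t in a..b, g' t ^ 2 ≤ g' b - g' a := by
    rw [← intervalIntegral.integral_const_mul]
    exact hg'm.intervalIntegral_le_sub_of_ae_le_deriv hab
      ((hg'c.pow 2).const_smul γ).intervalIntegrable hg''
  calc (g b - g a) ^ 2 * γ ≤ (b - a) * (∫ t in a..b, g' t ^ 2) * γ := by gcongr
    _ = (b - a) * (γ * ∫ t in a..b, g' t ^ 2) := by ring
    _ ≤ (b - a) * (g' b - g' a) := by gcongr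
    _ = (g' b - g' a) * (b - a) := mul_comm _ _

theorem stmt0_general (g g' g'' : ℝ → ℝ) (γ : ℝ) (hγ : γ ∈ Set.Ioc (0:ℝ) 1)
    (hconv : ConvexOn ℝ (Set.Ioi (0:ℝ)) g)
    (hderiv : ∀ r ∈ Set.Ioi (0:ℝ), HasDerivAt g (g' r) r)
    (hcont : ContinuousOn g' (Set.Ioi (0:ℝ)))
    (hderiv2 : ∀ᵐ r ∂volume, r ∈ Set.Ioi (0:ℝ) → HasDerivAt g' (g'' r) r)
    (hineq : ∀ᵐ r ∂volume, r ∈ Set.Ioi (0:ℝ) → γ * (g' r)^2 ≤ g'' r) :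
    ∀ x ∈ Set.Ioi (0:ℝ), ∀ y ∈ Set.Ioi (0:ℝ),
      (g y - g x)^2 * γ ≤ (g' y - g' x) * (y - x) := by
  have hmono : MonotoneOn g' (Ioi 0) := by
    intro a ha b hb hab
    simpa only [(hderiv a ha).deriv, (hderiv b hb).deriv] using
      hconv.monotoneOn_deriv (fun t ht => (hderiv t ht).differentiableAt) ha hb hab
  have hineq_deriv : ∀ᵐ r, r ∈ Ioi (0:ℝ) → γ * g' r ^ 2 ≤ deriv g' r := by
    filter_upwards [hderiv2, hineq] with r hr₁ hr₂ hr
    exact (hr₁ hr).deriv ▸ hr₂ hr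
  intro x hx y hy
  wlog hxy : x ≤ y generalizing x y
  · linarith [this y hy x hx (le_of_not_ge hxy)]
  have hIcc : Icc x y ⊆ Ioi 0 := fun t ht => lt_of_lt_of_le hx ht.1
  refine sq_sub_mul_le_of_mul_sq_le_deriv hγ.1.le hxy (fun t ht => hderiv t (hIcc ht))
    (hcont.mono hIcc) (hmono.mono hIcc) ?_
  filter_upwards [hineq_deriv] with t ht ht'
  exact ht (hIcc (Ioo_subset_Icc_self ht'))

/-- Cauchy–Schwarz step of Lemma A.1: for a C¹ convex non-increasing `g` on `(0,∞)`
with a.e. second derivative `g''` satisfying `γ g'(r)² ≤ g''(r)` a.e., one has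
`γ (g(y) - g(x))² ≤ (g'(y) - g'(x))(y - x)` for all `x, y > 0`. -/
theorem stmt0 (g g' g'' : ℝ → ℝ) (γ : ℝ) (hγ : γ ∈ Set.Ioc (0:ℝ) 1)
    (hconv : ConvexOn ℝ (Set.Ioi (0:ℝ)) g)
    (hanti : AntitoneOn g (Set.Ioi (0:ℝ)))
    (hderiv : ∀ r ∈ Set.Ioi (0:ℝ), HasDerivAt g (g' r) r)
    (hcont : ContinuousOn g' (Set.Ioi (0:ℝ)))
    (hderiv2 : ∀ᵐ r ∂volume, r ∈ Set.Ioi (0:ℝ) → HasDerivAt g' (g'' r) r)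
    (hineq : ∀ᵐ r ∂volume, r ∈ Set.Ioi (0:ℝ) → γ * (g' r)^2 ≤ g'' r) :
    ∀ x ∈ Set.Ioi (0:ℝ), ∀ y ∈ Set.Ioi (0:ℝ),
      (g y - g x)^2 * γ ≤ (g' y - g' x) * (y - x) :=
  stmt0_general g g' g'' γ hγ hconv hderiv hcont hderiv2 hineq
end

section
/- Let g : (0,∞) → ℝ be convex, non-increasing, and differentiable. Then for all x, y > 0 and a, b ≥ 0 with min(a,b) = 0: -(b²g'(y) - a²g'(x))(y - x) ≤ max(-x·g'(x), -y·g'(y))·(b - a)². -/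
open Set

lemma deriv_nonpos_of_antitone (g g' : ℝ → ℝ)
    (hanti : AntitoneOn g (Set.Ioi (0:ℝ)))
    (hderiv : ∀ r ∈ Set.Ioi (0:ℝ), HasDerivAt g (g' r) r) :
    ∀ r : ℝ, 0 < r → g' r ≤ 0 := by
  intro r hr
  have hd := (hderiv r hr).hasDerivWithinAt (s := Set.Ioi r)
  have ht := hasDerivWithinAt_iff_tendsto_slope.mp hd
  have hEq : Set.Ioi r \ {r} = Set.Ioi r := by
    ext z; simp only [Set.mem_diff, Set.mem_Ioi, Set.mem_singleton_iff]
    constructor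
    · exact fun h => h.1
    · exact fun h => ⟨h, ne_of_gt h⟩
  rw [hEq] at ht
  refine le_of_tendsto ht ?_
  filter_upwards [self_mem_nhdsWithin] with s hs
  have hs' : r < s := hs
  have hgs : g s ≤ g r := hanti hr (lt_trans hr hs') hs'.le
  have : slope g r s = (g s - g r) / (s - r) := by
    simp [slope_def_field, div_eq_div_iff]
  rw [this]
  exact div_nonpos_of_nonpos_of_nonneg (by linarith) (by linarith)

/-- Lemma A.1, degenerate case `a ∧ b = 0`. -/
theorem stmt2 (g g' : ℝ → ℝ)
    (hconv : ConvexOn ℝ (Set.Ioi (0:ℝ)) g)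
    (hanti : AntitoneOn g (Set.Ioi (0:ℝ)))
    (hderiv : ∀ r ∈ Set.Ioi (0:ℝ), HasDerivAt g (g' r) r) :
    ∀ x y a b : ℝ, 0 < x → 0 < y → 0 ≤ a → 0 ≤ b → min a b = 0 →
      -(b^2 * g' y - a^2 * g' x) * (y - x) ≤
        max (-(x * g' x)) (-(y * g' y)) * (b - a)^2 := by
  intro x y a b hx hy ha hb hmin
  have hgx : g' x ≤ 0 := deriv_nonpos_of_antitone g g' hanti hderiv x hx
  have hgy : g' y ≤ 0 := deriv_nonpos_of_antitone g g' hanti hderiv y hy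
  have hM1 : -(x * g' x) ≤ max (-(x * g' x)) (-(y * g' y)) := le_max_left _ _
  have hM2 : -(y * g' y) ≤ max (-(x * g' x)) (-(y * g' y)) := le_max_right _ _
  have hab : a = 0 ∨ b = 0 := by
    rcases min_cases a b with ⟨h1, h2⟩ | ⟨h1, h2⟩
    · left; linarith
    · right; linarith
  rcases hab with rfl | rfl
  · -- a = 0 case: need b^2 * (-(g' y)) * (y - x) ≤ max * b^2
    have key : -(g' y) * (y - x) ≤ max (-(x * g' x)) (-(y * g' y)) := by
      rcases le_total y x with h | h
      · nlinarith
      · nlinarith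
    nlinarith [mul_le_mul_of_nonneg_left key (sq_nonneg b)]
  · have key : g' x * (y - x) ≤ max (-(x * g' x)) (-(y * g' y)) := by
      rcases le_total x y with h | h
      · nlinarith
      · nlinarith
    nlinarith [mul_le_mul_of_nonneg_left key (sq_nonneg a)]
end

section
/- Let c* ∈ (0,1) satisfy 2c*·ln(1/c*) = 1 - c*. Define g : (0,∞) → ℝ by g(r) = -ln r for r ∈ (0, c*], g(r) = (r-1)²/(2c*(1-c*)) for r ∈ (c*, 1], and g(r) = 0 for r > 1. Then g is convex, non-increasing, and continuously differentiable on (0,∞). -/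
open Set Filter Topology

/-! On `(0, ∞)` the function `g` is a spline with pieces `-log r`, `(r - 1)² / (2c(1 - c))` and `0`
that agree to first order at the knots: the equation defining `c` makes the values meet at `c`, the
slopes `-1/c` and `(c - 1)/(c(1 - c))` meet there for every `c`, and the parabola has a double zero
at `1`. Hence `g` is differentiable with the continuous derivative `-1/r`, `(r - 1)/(c(1 - c))`, `0`,
which is nondecreasing and nonpositive; so `g` is convex, non-increasing and `C¹`. -/

theorem HasDerivAt.of_nhdsLE_of_nhdsGE {F : Type*} [NormedAddCommGroup F] [NormedSpace ℝ F]
    {f u v : ℝ → F} {a : ℝ} {f' : F} (hu : HasDerivAt u f' a) (hv : HasDerivAt v f' a)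
    (hfu : f =ᶠ[𝓝[≤] a] u) (hfv : f =ᶠ[𝓝[≥] a] v) : HasDerivAt f f' a := by
  rw [← hasDerivWithinAt_univ, ← Iic_union_Ici (a := a)]
  exact (hu.hasDerivWithinAt.congr_of_eventuallyEq hfu (hfu.eq_of_nhdsWithin self_mem_Iic)).union
    (hv.hasDerivWithinAt.congr_of_eventuallyEq hfv (hfv.eq_of_nhdsWithin self_mem_Ici))

section DerivCriteria

variable {f f' : ℝ → ℝ} {s : Set ℝ}

theorem MonotoneOn.convexOn_of_hasDerivAt (hf' : MonotoneOn f' s) (hs : IsOpen s)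
    (hs' : Convex ℝ s) (hf : ∀ x ∈ s, HasDerivAt f (f' x) x) : ConvexOn ℝ s f := by
  refine MonotoneOn.convexOn_of_deriv hs' (fun x hx => (hf x hx).continuousAt.continuousWithinAt)
    ?_ ?_ <;> rw [hs.interior_eq]
  · exact fun x hx => (hf x hx).differentiableAt.differentiableWithinAt
  · exact hf'.congr fun x hx => ((hf x hx).deriv).symm

theorem antitoneOn_of_hasDerivAt_nonpos (hs : IsOpen s) (hs' : Convex ℝ s)
    (hf : ∀ x ∈ s, HasDerivAt f (f' x) x) (hf' : ∀ x ∈ s, f' x ≤ 0) : AntitoneOn f s := by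
  refine antitoneOn_of_hasDerivWithinAt_nonpos (f' := f') hs'
    (fun x hx => (hf x hx).continuousAt.continuousWithinAt) ?_ ?_ <;> rw [hs.interior_eq]
  · exact fun x hx => (hf x hx).hasDerivWithinAt
  · exact hf'

end DerivCriteria

theorem contDiffOn_one_of_hasDerivAt {𝕜 F : Type*} [NontriviallyNormedField 𝕜]
    [NormedAddCommGroup F] [NormedSpace 𝕜 F] {f f' : 𝕜 → F} {s : Set 𝕜} (hs : IsOpen s)
    (hf : ∀ x ∈ s, HasDerivAt f (f' x) x) (hf' : ContinuousOn f' s) : ContDiffOn 𝕜 1 f s := by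
  rw [show (1 : WithTop ℕ∞) = 0 + 1 from rfl, contDiffOn_succ_iff_deriv_of_isOpen hs]
  refine ⟨fun x hx => (hf x hx).differentiableAt.differentiableWithinAt, by simp, ?_⟩
  exact contDiffOn_zero.mpr (hf'.congr fun x hx => (hf x hx).deriv)

section LogQuadSpline

variable {c : ℝ}

noncomputable def logQuadSpline (c r : ℝ) : ℝ :=
  if r ≤ c then -Real.log r else if r ≤ 1 then (r - 1) ^ 2 / (2 * c * (1 - c)) else 0

noncomputable def logQuadSplineDeriv (c r : ℝ) : ℝ :=
  if r ≤ c then -r⁻¹ else if r ≤ 1 then (r - 1) / (c * (1 - c)) else 0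

theorem neg_log_eq_sq_div_of_two_mul_log_inv_eq (hc : c ∈ Ioo 0 1)
    (hceq : 2 * c * Real.log (1 / c) = 1 - c) :
    -Real.log c = (c - 1) ^ 2 / (2 * c * (1 - c)) := by
  have : 2 * c * (1 - c) ≠ 0 := by nlinarith [hc.1, hc.2]
  rw [one_div, Real.log_inv] at hceq
  rw [eq_div_iff this]
  linear_combination (1 - c) * hceq

theorem logQuadSpline_eqOn_Iic : EqOn (logQuadSpline c) (fun r => -Real.log r) (Iic c) :=
  fun _ hr => if_pos hr

theorem logQuadSpline_eqOn_Icc (hc : c ∈ Ioo 0 1) (hceq : 2 * c * Real.log (1 / c) = 1 - c) :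
    EqOn (logQuadSpline c) (fun r => (r - 1) ^ 2 / (2 * c * (1 - c))) (Icc c 1) := by
  rintro r ⟨hcr, hr1⟩
  rcases hcr.eq_or_lt with rfl | hcr
  · simpa [logQuadSpline] using neg_log_eq_sq_div_of_two_mul_log_inv_eq hc hceq
  · simp [logQuadSpline, hcr.not_ge, hr1]

theorem logQuadSpline_eqOn_Ici (hc1 : c < 1) : EqOn (logQuadSpline c) 0 (Ici 1) := by
  intro r (hr : 1 ≤ r)
  rcases hr.eq_or_lt with rfl | hr
  · simp [logQuadSpline, hc1.not_ge]
  · simp [logQuadSpline, (hc1.trans hr).not_ge, hr.not_ge]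

theorem logQuadSplineDeriv_eqOn_Iic : EqOn (logQuadSplineDeriv c) (fun r => -r⁻¹) (Iic c) :=
  fun _ hr => if_pos hr

theorem logQuadSplineDeriv_eqOn_Icc (hc : c ∈ Ioo 0 1) :
    EqOn (logQuadSplineDeriv c) (fun r => (r - 1) / (c * (1 - c))) (Icc c 1) := by
  rintro r ⟨hcr, hr1⟩
  rcases hcr.eq_or_lt with rfl | hcr
  · have : 1 - c ≠ 0 := by linarith [hc.2]
    simp only [logQuadSplineDeriv, le_refl, if_true]
    field_simp [hc.1.ne']
    ring
  · simp [logQuadSplineDeriv, hcr.not_ge, hr1]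

theorem logQuadSplineDeriv_eqOn_Ici (hc1 : c < 1) : EqOn (logQuadSplineDeriv c) 0 (Ici 1) := by
  intro r (hr : 1 ≤ r)
  rcases hr.eq_or_lt with rfl | hr
  · simp [logQuadSplineDeriv, hc1.not_ge]
  · simp [logQuadSplineDeriv, (hc1.trans hr).not_ge, hr.not_ge]

theorem hasDerivAt_logQuadSpline (hc : c ∈ Ioo 0 1) (hceq : 2 * c * Real.log (1 / c) = 1 - c)
    {x : ℝ} (hx : 0 < x) : HasDerivAt (logQuadSpline c) (logQuadSplineDeriv c x) x := by
  have hlog (y : ℝ) (hy : y ≤ c) (hy0 : 0 < y) :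
      HasDerivAt (fun r => -Real.log r) (logQuadSplineDeriv c y) y := by
    rw [logQuadSplineDeriv_eqOn_Iic hy]
    exact (Real.hasDerivAt_log hy0.ne').neg
  have hquad (y : ℝ) (hy : y ∈ Icc c 1) :
      HasDerivAt (fun r => (r - 1) ^ 2 / (2 * c * (1 - c))) (logQuadSplineDeriv c y) y := by
    rw [logQuadSplineDeriv_eqOn_Icc hc hy]
    refine ((((hasDerivAt_id' y).sub_const 1).fun_pow 2).div_const _).congr_deriv ?_
    field_simp
    ring
  have hzero (y : ℝ) (hy : 1 ≤ y) :
      HasDerivAt (0 : ℝ → ℝ) (logQuadSplineDeriv c y) y := by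
    rw [logQuadSplineDeriv_eqOn_Ici hc.2 hy]
    exact hasDerivAt_const y 0
  rcases lt_trichotomy x c with hxc | rfl | hcx
  · exact (hlog x hxc.le hx).congr_of_eventuallyEq
      (eventuallyEq_of_mem (Iic_mem_nhds hxc) logQuadSpline_eqOn_Iic)
  · exact (hlog x le_rfl hx).of_nhdsLE_of_nhdsGE (hquad x ⟨le_rfl, hc.2.le⟩)
      (eventuallyEq_of_mem self_mem_nhdsWithin logQuadSpline_eqOn_Iic)
      (eventuallyEq_of_mem (Icc_mem_nhdsGE hc.2) (logQuadSpline_eqOn_Icc hc hceq))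
  rcases lt_trichotomy x 1 with hx1 | rfl | hx1
  · exact (hquad x ⟨hcx.le, hx1.le⟩).congr_of_eventuallyEq
      (eventuallyEq_of_mem (Icc_mem_nhds hcx hx1) (logQuadSpline_eqOn_Icc hc hceq))
  · exact (hquad 1 ⟨hc.2.le, le_rfl⟩).of_nhdsLE_of_nhdsGE (hzero 1 le_rfl)
      (eventuallyEq_of_mem (Icc_mem_nhdsLE hc.2) (logQuadSpline_eqOn_Icc hc hceq))
      (eventuallyEq_of_mem self_mem_nhdsWithin (logQuadSpline_eqOn_Ici hc.2))
  · exact (hzero x hx1.le).congr_of_eventuallyEq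
      (eventuallyEq_of_mem (Ici_mem_nhds hx1) (logQuadSpline_eqOn_Ici hc.2))

theorem monotoneOn_logQuadSplineDeriv (hc : c ∈ Ioo 0 1) :
    MonotoneOn (logQuadSplineDeriv c) (Ioi 0) := by
  have hlog : MonotoneOn (logQuadSplineDeriv c) (Ioc 0 c) := fun x hx y hy hxy => by
    rw [logQuadSplineDeriv_eqOn_Iic hx.2, logQuadSplineDeriv_eqOn_Iic hy.2]
    exact neg_le_neg (inv_anti₀ hx.1 hxy)
  have hquad : MonotoneOn (logQuadSplineDeriv c) (Icc c 1) := fun x hx y hy hxy => by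
    have : 0 < c * (1 - c) := mul_pos hc.1 (sub_pos.2 hc.2)
    rw [logQuadSplineDeriv_eqOn_Icc hc hx, logQuadSplineDeriv_eqOn_Icc hc hy]
    dsimp only
    gcongr
  have hzero : MonotoneOn (logQuadSplineDeriv c) (Ici 1) := fun x hx y hy _ => by
    rw [logQuadSplineDeriv_eqOn_Ici hc.2 hx, logQuadSplineDeriv_eqOn_Ici hc.2 hy]
    rfl
  have hIoc : MonotoneOn (logQuadSplineDeriv c) (Ioc 0 1) := by
    rw [← Ioc_union_Icc_eq_Ioc hc.1 hc.2.le]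
    exact hlog.union_right hquad (isGreatest_Ioc hc.1) (isLeast_Icc hc.2.le)
  rw [← Ioc_union_Ici_eq_Ioi one_pos]
  exact hIoc.union_right hzero (isGreatest_Ioc one_pos) isLeast_Ici

theorem logQuadSplineDeriv_nonpos (hc : c ∈ Ioo 0 1) {x : ℝ} (hx : 0 < x) :
    logQuadSplineDeriv c x ≤ 0 :=
  calc logQuadSplineDeriv c x ≤ logQuadSplineDeriv c (max x 1) :=
        monotoneOn_logQuadSplineDeriv hc hx (lt_max_of_lt_left hx) (le_max_left x 1)
    _ = 0 := logQuadSplineDeriv_eqOn_Ici hc.2 (le_max_right x 1)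

theorem continuousOn_logQuadSplineDeriv (hc : c ∈ Ioo 0 1) :
    ContinuousOn (logQuadSplineDeriv c) (Ioi 0) := by
  have hright : Continuous fun r : ℝ => if r ≤ 1 then (r - 1) / (c * (1 - c)) else 0 :=
    Continuous.if_le (by fun_prop) continuous_const continuous_id continuous_const
      fun r hr => by simp [hr]
  refine ContinuousOn.if (fun r ⟨_, hr⟩ => ?_)
    (continuousOn_inv₀.neg.mono fun r hr => ne_of_gt hr.1) hright.continuousOn
  rw [show {r : ℝ | r ≤ c} = Iic c from rfl, frontier_Iic, mem_singleton_iff] at hr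
  subst hr
  simpa [logQuadSplineDeriv, hc.2.le] using logQuadSplineDeriv_eqOn_Icc hc ⟨le_rfl, hc.2.le⟩

end LogQuadSpline

/-- The function `g` from (2.12) is convex, non-increasing and C¹ on `(0,∞)`. -/
theorem stmt4 (c : ℝ) (hc : c ∈ Set.Ioo (0:ℝ) 1)
    (hceq : 2 * c * Real.log (1/c) = 1 - c)
    (g : ℝ → ℝ)
    (hg1 : ∀ r ∈ Set.Ioc (0:ℝ) c, g r = -Real.log r)
    (hg2 : ∀ r ∈ Set.Ioc c 1, g r = (r-1)^2 / (2*c*(1-c)))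
    (hg3 : ∀ r > (1:ℝ), g r = 0) :
    ConvexOn ℝ (Set.Ioi (0:ℝ)) g ∧ AntitoneOn g (Set.Ioi (0:ℝ)) ∧
      ContDiffOn ℝ 1 g (Set.Ioi (0:ℝ)) := by
  have hspline : EqOn (logQuadSpline c) g (Ioi 0) := by
    intro r (hr : 0 < r)
    unfold logQuadSpline
    split_ifs with hrc hr1
    · exact (hg1 r ⟨hr, hrc⟩).symm
    · exact (hg2 r ⟨not_le.1 hrc, hr1⟩).symm
    · exact (hg3 r (not_le.1 hr1)).symm
  have hderiv (x : ℝ) (hx : x ∈ Ioi 0) : HasDerivAt g (logQuadSplineDeriv c x) x :=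
    (hasDerivAt_logQuadSpline hc hceq hx).congr_of_eventuallyEq
      (eventuallyEq_of_mem (isOpen_Ioi.mem_nhds hx) hspline.symm)
  exact ⟨(monotoneOn_logQuadSplineDeriv hc).convexOn_of_hasDerivAt isOpen_Ioi (convex_Ioi 0) hderiv,
    antitoneOn_of_hasDerivAt_nonpos isOpen_Ioi (convex_Ioi 0) hderiv
      fun _ hx => logQuadSplineDeriv_nonpos hc hx,
    contDiffOn_one_of_hasDerivAt isOpen_Ioi hderiv (continuousOn_logQuadSplineDeriv hc)⟩
end

section
/- Let g be the function defined by g(r) = -ln r on (0, c*], g(r) = (r-1)²/(2c*(1-c*)) on (c*, 1], g(r) = 0 on (1,∞), where c* ∈ [1/4,1/3] solves 2c ln(1/c) = 1-c. Then (1/3)·g'(r)² ≤ g''(r) for almost every r ∈ (0,∞), and -r·g'(r) ≤ 4/3 for all r ∈ (0,∞). -/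
open MeasureTheory Set

/-- Differential inequalities for the function `g` from (2.12):
`(1/3) g'(r)² ≤ g''(r)` a.e. and `-r g'(r) ≤ 4/3` for all `r > 0`. -/
theorem stmt5 (c : ℝ) (hc : c ∈ Set.Icc (1/4:ℝ) (1/3))
    (hceq : 2 * c * Real.log (1/c) = 1 - c)
    (g g' g'' : ℝ → ℝ)
    (hg1 : ∀ r ∈ Set.Ioc (0:ℝ) c, g r = -Real.log r)
    (hg2 : ∀ r ∈ Set.Ioc c 1, g r = (r-1)^2 / (2*c*(1-c)))
    (hg3 : ∀ r > (1:ℝ), g r = 0)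
    (hg'1 : ∀ r ∈ Set.Ioc (0:ℝ) c, g' r = -(1/r))
    (hg'2 : ∀ r ∈ Set.Ioc c 1, g' r = (r-1) / (c*(1-c)))
    (hg'3 : ∀ r > (1:ℝ), g' r = 0)
    (hg''1 : ∀ r ∈ Set.Ioo (0:ℝ) c, g'' r = 1/r^2)
    (hg''2 : ∀ r ∈ Set.Ioo c 1, g'' r = 1/(c*(1-c)))
    (hg''3 : ∀ r > (1:ℝ), g'' r = 0) :
    (∀ᵐ r ∂volume, r ∈ Set.Ioi (0:ℝ) → (1/3) * (g' r)^2 ≤ g'' r) ∧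
      (∀ r ∈ Set.Ioi (0:ℝ), -(r * g' r) ≤ 4/3) := by
  obtain ⟨hc1, hc2⟩ := hc
  have hcpos : (0:ℝ) < c := by linarith
  have hc1' : c < 1 := by linarith
  have hden : 0 < c * (1-c) := by nlinarith
  constructor
  · have h0 : ∀ᵐ r : ℝ, r ≠ c := by
      rw [ae_iff]
      simpa using Real.volume_singleton (a := c)
    have h1 : ∀ᵐ r : ℝ, r ≠ (1:ℝ) := by
      rw [ae_iff]
      simpa using Real.volume_singleton (a := (1:ℝ))
    filter_upwards [h0, h1] with r hrc hr1 hr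
    have hr0 : (0:ℝ) < r := hr
    rcases lt_trichotomy r c with hlt | heq | hgt
    · rw [hg''1 r ⟨hr0, hlt⟩, hg'1 r ⟨hr0, hlt.le⟩]
      have h2 : (0:ℝ) < 1 / r ^ 2 := by positivity
      rw [neg_sq, div_pow, one_pow]
      linarith
    · exact absurd heq hrc
    · rcases lt_trichotomy r 1 with hlt1 | heq1 | hgt1
      · rw [hg''2 r ⟨hgt, hlt1⟩, hg'2 r ⟨hgt, hlt1.le⟩]
        have key : (r-1)^2 ≤ 3*(c*(1-c)) := by nlinarith
        have hD2 : (0:ℝ) < (c*(1-c))^2 := by positivity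
        rw [div_pow, ← mul_div_assoc, div_le_div_iff₀ hD2 hden]
        nlinarith [mul_le_mul_of_nonneg_right key hden.le]
      · exact absurd heq1 hr1
      · rw [hg''3 r hgt1, hg'3 r hgt1]
        norm_num
  · intro r hr
    have hr0 : (0:ℝ) < r := hr
    rcases le_or_gt r c with hle | hgt
    · rw [hg'1 r ⟨hr0, hle⟩]
      rw [mul_neg, neg_neg, mul_one_div, div_self hr0.ne']
      norm_num
    · rcases le_or_gt r 1 with hle1 | hgt1
      · rw [hg'2 r ⟨hgt, hle1⟩]
        have heq : -(r * ((r-1)/(c*(1-c)))) = r*(1-r)/(c*(1-c)) := by ring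
        rw [heq, div_le_div_iff₀ hden (by norm_num : (0:ℝ) < 3)]
        nlinarith [sq_nonneg (2*r - 1), mul_nonneg (by linarith : (0:ℝ) ≤ 4*c - 1) (by linarith : (0:ℝ) ≤ 3 - 4*c)]
      · rw [hg'3 r hgt1]
        norm_num
end
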